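/- Let 𝒫 be a (ρ,cov)-good partition with representatives R and children child(·), and let λ_v := |child(v)| for v ∈ R and λ_v := 0 otherwise. Suppose there exists S₀ ⊆ F with |S₀| ≤ k such that Σ_{v : |S₀ ∩ B(v,r)| ≥ ℓ_v} λ_v ≥ m. Then setting, for each part P, j'_P := the j ∈ R∩P with |S₀ ∩ B(j,r)| ≥ ℓ_j maximizing ℓ_j, and k'_P := ℓ_{j'_P} (and k'_P := 0 if no such j exists), the family (k'_P) satisfies k'_P ≤ ℓ_P := max_{v∈P} ℓ_v, Σ_P k'_P ≤ k, and Σ_P Σ_{j∈R∩P: ℓ_j ≤ k'_P} |child(j)| ≥ m. -/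

import Mathlib

/-! Balls of radius `r` around centres at pairwise distance `> 2r` are disjoint, so the
budgets `k'_P = ℓ (j'_P) ≤ |S₀ ∩ B(j'_P, r)|` add up to at most `|S₀| ≤ k`. Every
representative `j` with `|S₀ ∩ B(j, r)| ≥ ℓ_j` lies in some part `P` and satisfies
`ℓ_j ≤ k'_P` by the maximality of `j'_P`, so each child set counted in the hypothesis
is counted again on the right-hand side. -/

open Finset

namespace Finset

variable {α M : Type*} [DecidableEq α] [AddCommMonoid M] [PartialOrder M] [IsOrderedAddMonoid M]

theorem sum_le_sum_sum_filter_mem_of_subset_biUnion {s : Finset α} {Ps : Finset (Finset α)}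
    {f : α → M} (hf : ∀ x ∈ s, 0 ≤ f x) (hs : s ⊆ Ps.biUnion id) :
    ∑ x ∈ s, f x ≤ ∑ P ∈ Ps, ∑ x ∈ s with x ∈ P, f x := by
  calc ∑ x ∈ s, f x ≤ ∑ x ∈ s, ∑ P ∈ Ps with x ∈ P, f x := by
        refine sum_le_sum fun x hx => ?_
        obtain ⟨P, hP, hxP⟩ := mem_biUnion.1 (hs hx)
        exact single_le_sum (f := fun _ => f x) (fun _ _ => hf x hx) (mem_filter.2 ⟨hP, hxP⟩)
    _ = ∑ P ∈ Ps, ∑ x ∈ s with x ∈ P, f x :=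
        sum_comm' fun x P => by simp only [mem_filter]; tauto

end Finset

section Metric

variable {X : Type*} [MetricSpace X]

theorem disjoint_filter_dist_le_of_two_mul_lt_dist (S : Finset X) {r : ℝ} {a b : X}
    (h : 2 * r < dist a b) :
    Disjoint {x ∈ S | dist a x ≤ r} {x ∈ S | dist b x ≤ r} := by
  refine disjoint_filter.2 fun x _ hax hbx => ?_
  exact Metric.closedBall_disjoint_closedBall (by linarith) |>.ne_of_mem
    (Metric.mem_closedBall'.2 hax) (Metric.mem_closedBall'.2 hbx) rfl

theorem sum_le_card_of_pairwise_two_mul_lt_dist {ι : Type*} (S : Finset X) {r : ℝ}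
    {s : Finset ι} {c : ι → X} {f : ι → ℕ}
    (hf : ∀ i ∈ s, f i ≤ #{x ∈ S | dist (c i) x ≤ r})
    (hsep : (s : Set ι).Pairwise fun i i' => 2 * r < dist (c i) (c i')) :
    ∑ i ∈ s, f i ≤ #S := by
  classical
  calc ∑ i ∈ s, f i ≤ ∑ i ∈ s, #{x ∈ S | dist (c i) x ≤ r} := sum_le_sum hf
    _ = #(s.biUnion fun i => {x ∈ S | dist (c i) x ≤ r}) :=
        (card_biUnion fun i hi i' hi' hne =>
          disjoint_filter_dist_le_of_two_mul_lt_dist S (hsep hi hi' hne)).symm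
    _ ≤ #S := card_le_card (biUnion_subset.2 fun _ _ => filter_subset _ _)

end Metric

theorem stmt19_general {X : Type*} [MetricSpace X] [DecidableEq X] (r : ℝ) (k m : ℕ)
    (C : Finset X) (Part : Finset (Finset X)) (R : Finset X)
    (child : X → Finset X) (ℓ : X → ℕ)
    (S₀ : Finset X) (hS₀k : S₀.card ≤ k)
    (hRC : R ⊆ C)
    (hpart : C = Part.biUnion id)
    (hsep : ∀ P ∈ Part, ∀ Q ∈ Part, P ≠ Q → ∀ j ∈ R ∩ P, ∀ j' ∈ R ∩ Q, 2 * r < dist j j')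
    (lam : X → ℕ) (hlam : ∀ v : X, lam v = if v ∈ R then (child v).card else 0)
    (hm : m ≤ ∑ v ∈ C.filter
      (fun v => ℓ v ≤ (S₀.filter (fun s => dist v s ≤ r)).card), lam v)
    (j' : Finset X → X) (k' : Finset X → ℕ)
    (hj' : ∀ P ∈ Part,
      (∃ j ∈ R ∩ P, ℓ j ≤ (S₀.filter (fun s => dist j s ≤ r)).card) →
        j' P ∈ R ∩ P ∧
        ℓ (j' P) ≤ (S₀.filter (fun s => dist (j' P) s ≤ r)).card ∧
        (∀ j ∈ R ∩ P, ℓ j ≤ (S₀.filter (fun s => dist j s ≤ r)).card → ℓ j ≤ ℓ (j' P)) ∧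
        k' P = ℓ (j' P))
    (hk'0 : ∀ P ∈ Part,
      (¬∃ j ∈ R ∩ P, ℓ j ≤ (S₀.filter (fun s => dist j s ≤ r)).card) → k' P = 0) :
    (∀ P ∈ Part, k' P ≤ P.sup ℓ) ∧
    (∑ P ∈ Part, k' P ≤ k) ∧
    (m ≤ ∑ P ∈ Part, ∑ j ∈ (R ∩ P).filter (fun j => ℓ j ≤ k' P), (child j).card) := by
  set covers : X → Prop := fun j => ℓ j ≤ #{s ∈ S₀ | dist j s ≤ r}
  have hk'_ne : ∀ P ∈ Part, k' P ≠ 0 → ∃ j ∈ R ∩ P, covers j :=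
    fun P hP hne => by_contra (hne ∘ hk'0 P hP)
  refine ⟨fun P hP => ?_, ?_, ?_⟩
  · by_cases hex : ∃ j ∈ R ∩ P, covers j
    · obtain ⟨hmem, -, -, hk⟩ := hj' P hP hex
      exact hk ▸ le_sup (mem_of_mem_inter_right hmem)
    · simp [hk'0 P hP hex]
  · rw [← sum_filter_of_ne hk'_ne]
    refine (sum_le_card_of_pairwise_two_mul_lt_dist S₀ (r := r) (c := j') (fun P hP => ?_)
      fun P hP Q hQ hne => ?_).trans hS₀k
    · obtain ⟨hP, hex⟩ := mem_filter.1 hP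
      obtain ⟨-, hcov, -, hk⟩ := hj' P hP hex
      exact hk ▸ hcov
    · obtain ⟨hP, hexP⟩ := mem_filter.1 hP
      obtain ⟨hQ, hexQ⟩ := mem_filter.1 hQ
      exact hsep P hP Q hQ hne _ (hj' P hP hexP).1 _ (hj' Q hQ hexQ).1
  · have hlam_sum : ∑ v ∈ C with covers v, lam v = ∑ j ∈ R with covers j, #(child j) := by
      rw [← sum_subset (filter_subset_filter _ hRC) fun v hv hvR => ?_]
      · exact sum_congr rfl fun j hj => by rw [hlam, if_pos (mem_filter.1 hj).1]
      · rw [hlam, if_neg fun hv' => hvR (mem_filter.2 ⟨hv', (mem_filter.1 hv).2⟩)]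
    calc m ≤ ∑ j ∈ R with covers j, #(child j) := hm.trans_eq hlam_sum
      _ ≤ ∑ P ∈ Part, ∑ j ∈ {j ∈ R | covers j} with j ∈ P, #(child j) :=
        sum_le_sum_sum_filter_mem_of_subset_biUnion (fun _ _ => Nat.zero_le _)
          (hpart ▸ (filter_subset _ _).trans hRC)
      _ ≤ _ := sum_le_sum fun P hP => sum_le_sum_of_subset fun j hj => by
        obtain ⟨⟨hjR, hcov⟩, hjP⟩ := by simpa only [mem_filter] using hj
        have hjRP : j ∈ R ∩ P := mem_inter.2 ⟨hjR, hjP⟩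
        obtain ⟨-, -, hmax, hk⟩ := hj' P hP ⟨j, hjRP, hcov⟩
        exact mem_filter.2 ⟨hjRP, hk ▸ hmax j hjRP hcov⟩

theorem stmt19 {X : Type*} [MetricSpace X] [DecidableEq X] (r : ℝ) (k m : ℕ)
    (C F : Finset X) (Part : Finset (Finset X)) (R : Finset X)
    (child : X → Finset X) (ℓ : X → ℕ)
    (S₀ : Finset X) (hS₀F : S₀ ⊆ F) (hS₀k : S₀.card ≤ k)
    (hRC : R ⊆ C)
    (hpart : C = Part.biUnion id)
    (hPartdisj : ∀ P ∈ Part, ∀ Q ∈ Part, P ≠ Q → Disjoint P Q)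
    (hccover : C = R.biUnion child)
    (hcdisj : ∀ j ∈ R, ∀ j' ∈ R, j ≠ j' → Disjoint (child j) (child j'))
    (hrefine : ∀ P ∈ Part, ∀ j ∈ R ∩ P, child j ⊆ P)
    (hchildl : ∀ j ∈ R, ∀ v ∈ child j, ℓ v ≤ ℓ j)
    (hsep : ∀ P ∈ Part, ∀ Q ∈ Part, P ≠ Q → ∀ j ∈ R ∩ P, ∀ j' ∈ R ∩ Q, 2 * r < dist j j')
    (lam : X → ℕ) (hlam : ∀ v : X, lam v = if v ∈ R then (child v).card else 0)
    (hm : m ≤ ∑ v ∈ C.filter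
      (fun v => ℓ v ≤ (S₀.filter (fun s => dist v s ≤ r)).card), lam v)
    (j' : Finset X → X) (k' : Finset X → ℕ)
    (hj' : ∀ P ∈ Part,
      (∃ j ∈ R ∩ P, ℓ j ≤ (S₀.filter (fun s => dist j s ≤ r)).card) →
        j' P ∈ R ∩ P ∧
        ℓ (j' P) ≤ (S₀.filter (fun s => dist (j' P) s ≤ r)).card ∧
        (∀ j ∈ R ∩ P, ℓ j ≤ (S₀.filter (fun s => dist j s ≤ r)).card → ℓ j ≤ ℓ (j' P)) ∧
        k' P = ℓ (j' P))
    (hk'0 : ∀ P ∈ Part,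
      (¬∃ j ∈ R ∩ P, ℓ j ≤ (S₀.filter (fun s => dist j s ≤ r)).card) → k' P = 0) :
    (∀ P ∈ Part, k' P ≤ P.sup ℓ) ∧
    (∑ P ∈ Part, k' P ≤ k) ∧
    (m ≤ ∑ P ∈ Part, ∑ j ∈ (R ∩ P).filter (fun j => ℓ j ≤ k' P), (child j).card) :=
  stmt19_general r k m C Part R child ℓ S₀ hS₀k hRC hpart hsep lam hlam hm j' k' hj' hk'0
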